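/- Let (Ω, 𝔉, P) be a probability space with a filtration 𝔉_1 ⊆ 𝔉_2 ⊆ ⋯, and let (X_1, Y_1), …, (X_T, Y_T) be pairs of real random variables such that each X_t and Y_t is 𝔉_{t+1}-measurable, and assume for some constant B > 0 that almost surely |X_t| ≤ B and 0 ≤ Y_t ≤ B, that E[X_t | 𝔉_t] ≥ E[Y_t | 𝔉_t], and that B · E[X_t | 𝔉_t] ≥ E[X_t² | 𝔉_t] for every t. Then for every δ ∈ (0,1): (i) with probability at least 1 − δ, (1/2) · Σ_{t=1}^T E[X_t | 𝔉_t] ≤ Σ_{t=1}^T (X_t − Y_t/4) + 9B · log(1/δ); and (ii) with probability at least 1 − δ, (1/2) · Σ_{t=1}^T X_t ≤ Σ_{t=1}^T (X_t − Y_t/4) + 9B · log(1/δ). -/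

import Mathlib

/-!
Write `E_t` for `E[· | 𝔉_t]`. For `α, β ≥ 0` with `(α + β) B ≤ 1`, put `u_t = β Y_t - α X_t ≤ 1`.
From `exp u ≤ 1 + u + u²` for `u ≤ 1`, `u_t² ≤ 2β² B Y_t + 2α² X_t²` and
`E_t[X_t²] ≤ B E_t[X_t]`, one gets `E_t[exp u_t] ≤ exp g_t` with
`g_t = (β + 2β²B) E_t[Y_t] - (α - 2α²B) E_t[X_t]`, so `exp (∑_{s ≤ t} (u_s - g_s))` is a
supermartingale of mean at most `1`. Markov's inequality bounds `∑_t (u_t - g_t)` by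
`log (1/δ)` with probability at least `1 - δ`, and `E_t[Y_t] ≤ E_t[X_t]` turns this into (i)
for `(α, β) = (2/17, 1/34) / B` and into (ii) for `(α, β) = (1/5, 1/10) / B`.
-/

open MeasureTheory Finset

theorem Real.exp_le_one_add_add_sq {x : ℝ} (hx : x ≤ 1) : Real.exp x ≤ 1 + x + x ^ 2 := by
  rcases le_or_gt (-1) x with h | h
  · have hbound := Real.exp_bound (abs_le.2 ⟨h, hx⟩) (n := 2) two_pos
    norm_num [Finset.sum_range_succ, sq_abs] at hbound
    linarith [(abs_sub_le_iff.1 hbound).1, sq_nonneg x]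
  · nlinarith [Real.exp_lt_one_iff.2 (by linarith : x < 0)]

section

variable {Ω : Type*} {m m0 : MeasurableSpace Ω} {P : Measure Ω}

theorem integrable_exp_of_ae_le [IsFiniteMeasure P] {f : Ω → ℝ} {C : ℝ}
    (hf : AEStronglyMeasurable f P) (hfC : ∀ᵐ ω ∂P, f ω ≤ C) :
    Integrable (fun ω => Real.exp (f ω)) P :=
  .of_bound (Real.continuous_exp.comp_aestronglyMeasurable hf) (Real.exp C) <| by
    filter_upwards [hfC] with ω hω
    rw [Real.norm_eq_abs, abs_of_pos (Real.exp_pos _)]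
    exact Real.exp_le_exp.2 hω

theorem integrable_exp_sum [IsFiniteMeasure P] {ι : Type*} {Z : ι → Ω → ℝ} {C : ℝ}
    (s : Finset ι) (hZ : ∀ t ∈ s, AEStronglyMeasurable (Z t) P)
    (hZC : ∀ t ∈ s, ∀ᵐ ω ∂P, Z t ω ≤ C) :
    Integrable (fun ω => Real.exp (∑ t ∈ s, Z t ω)) P :=
  integrable_exp_of_ae_le (s.aestronglyMeasurable_fun_sum hZ) (C := ∑ _ ∈ s, C) <| by
    filter_upwards [(Filter.eventually_all_finset s).2 hZC] with ω hω using sum_le_sum hω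

theorem one_sub_le_measureReal_le_log [IsProbabilityMeasure P] {S : Ω → ℝ}
    (hint : Integrable (fun ω => Real.exp (S ω)) P) (hS : ∫ ω, Real.exp (S ω) ∂P ≤ 1)
    {δ : ℝ} (hδ : 0 < δ) :
    1 - δ ≤ P.real {ω | S ω ≤ Real.log (1 / δ)} := by
  have markov : P.real {ω | 1 / δ ≤ Real.exp (S ω)} ≤ δ := by
    have := (mul_meas_ge_le_integral_of_nonneg
      (.of_forall fun ω => (Real.exp_pos (S ω)).le) hint (1 / δ)).trans hS
    rw [one_div, inv_mul_le_iff₀ hδ, mul_one] at this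
    simpa only [one_div] using this
  have hcover : Set.univ ⊆ {ω | S ω ≤ Real.log (1 / δ)} ∪ {ω | 1 / δ ≤ Real.exp (S ω)} := by
    intro ω _
    by_contra! hω
    simp only [Set.mem_union, Set.mem_ofPred_eq, not_or, not_le] at hω
    exact hω.2.not_ge ((Real.exp_log (by positivity)).symm.le.trans (Real.exp_le_exp.2 hω.1.le))
  have := (measureReal_mono (μ := P) hcover).trans (measureReal_union_le _ _)
  rw [probReal_univ] at this
  linarith

theorem integral_exp_add_le_of_condExp_exp_le_one [IsFiniteMeasure P] (hm : m ≤ m0)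
    {S Z : Ω → ℝ} (hS : AEStronglyMeasurable[m] S P)
    (hSint : Integrable (fun ω => Real.exp (S ω)) P)
    (hZint : Integrable (fun ω => Real.exp (Z ω)) P)
    (hSZint : Integrable (fun ω => Real.exp (S ω + Z ω)) P)
    (hZexp : P[fun ω => Real.exp (Z ω) | m] ≤ᵐ[P] 1) :
    ∫ ω, Real.exp (S ω + Z ω) ∂P ≤ ∫ ω, Real.exp (S ω) ∂P := by
  have hpull : P[(fun ω => Real.exp (S ω)) * fun ω => Real.exp (Z ω) | m] =ᵐ[P]
      (fun ω => Real.exp (S ω)) * P[fun ω => Real.exp (Z ω) | m] :=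
    condExp_mul_of_aestronglyMeasurable_left (Real.continuous_exp.comp_aestronglyMeasurable hS)
      (by simpa only [Pi.mul_def, ← Real.exp_add] using hSZint) hZint
  calc ∫ ω, Real.exp (S ω + Z ω) ∂P
      = ∫ ω, (P[(fun ω => Real.exp (S ω)) * fun ω => Real.exp (Z ω) | m]) ω ∂P := by
        simp only [Real.exp_add]
        exact (integral_condExp hm).symm
    _ ≤ ∫ ω, Real.exp (S ω) ∂P := by
        refine integral_mono_ae integrable_condExp hSint ?_
        filter_upwards [hpull, hZexp] with ω hω h1
        rw [hω, Pi.mul_apply]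
        exact mul_le_of_le_one_right (Real.exp_pos _).le h1

theorem integral_exp_sum_le_one [IsProbabilityMeasure P] (ℱ : Filtration ℕ m0)
    {Z : ℕ → Ω → ℝ} {C : ℝ} (T : ℕ)
    (hZm : ∀ t ∈ Icc 1 T, StronglyMeasurable[ℱ (t + 1)] (Z t))
    (hZC : ∀ t ∈ Icc 1 T, ∀ᵐ ω ∂P, Z t ω ≤ C)
    (hZexp : ∀ t ∈ Icc 1 T, P[fun ω => Real.exp (Z t ω) | ℱ t] ≤ᵐ[P] 1) :
    ∫ ω, Real.exp (∑ t ∈ Icc 1 T, Z t ω) ∂P ≤ 1 := by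
  induction T with
  | zero => simp
  | succ n ih =>
    have hsub : Icc 1 n ⊆ Icc 1 (n + 1) := Icc_subset_Icc_right n.le_succ
    have hlast : n + 1 ∈ Icc 1 (n + 1) := by simp
    have hZm₀ : ∀ t ∈ Icc 1 (n + 1), AEStronglyMeasurable (Z t) P :=
      fun t ht => ((hZm t ht).mono (ℱ.le _)).aestronglyMeasurable
    have hSm : StronglyMeasurable[ℱ (n + 1)] fun ω => ∑ t ∈ Icc 1 n, Z t ω :=
      Finset.stronglyMeasurable_fun_sum _ fun t ht =>
        (hZm t (hsub ht)).mono (ℱ.mono (by simp only [mem_Icc] at ht; omega : t + 1 ≤ n + 1))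
    have hstep := integral_exp_add_le_of_condExp_exp_le_one (ℱ.le _) hSm.aestronglyMeasurable
      (integrable_exp_sum _ (fun t ht => hZm₀ t (hsub ht)) fun t ht => hZC t (hsub ht))
      (integrable_exp_of_ae_le (hZm₀ _ hlast) (hZC _ hlast))
      (by simpa only [sum_Icc_succ_top (by omega : 1 ≤ n + 1)] using
        integrable_exp_sum _ hZm₀ hZC)
      (hZexp _ hlast)
    simp only [sum_Icc_succ_top (by omega : 1 ≤ n + 1)]
    exact hstep.trans (ih (fun t ht => hZm t (hsub ht)) (fun t ht => hZC t (hsub ht))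
      fun t ht => hZexp t (hsub ht))

theorem condExp_const_add_mul_add_mul_add_mul [IsFiniteMeasure P] (hm : m ≤ m0)
    {f g h : Ω → ℝ} (hf : Integrable f P) (hg : Integrable g P) (hh : Integrable h P)
    (d a b c : ℝ) :
    P[fun ω => d + a * f ω + b * g ω + c * h ω | m] =ᵐ[P]
      fun ω => d + a * P[f | m] ω + b * P[g | m] ω + c * P[h | m] ω := by
  have hfun : (fun ω => d + a * f ω + b * g ω + c * h ω) =
      (fun _ => d) + a • f + b • g + c • h := rfl
  rw [hfun]
  filter_upwards [condExp_add (((integrable_const d).add (hf.smul a)).add (hg.smul b))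
      (hh.smul c) m, condExp_add ((integrable_const d).add (hf.smul a)) (hg.smul b) m,
    condExp_add (integrable_const d) (hf.smul a) m, condExp_smul a f m, condExp_smul b g m,
    condExp_smul c h m] with ω h1 h2 h3 h4 h5 h6
  simp only [h1, Pi.add_apply, h2, h3, condExp_const hm, h4, h5, h6, Pi.smul_apply, smul_eq_mul]

section OneStep

variable {X Y : Ω → ℝ} {B α β : ℝ}

theorem ae_mul_sub_mul_le_one (hXB : ∀ᵐ ω ∂P, |X ω| ≤ B) (hYB : ∀ᵐ ω ∂P, Y ω ∈ Set.Icc 0 B)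
    (hα : 0 ≤ α) (hβ : 0 ≤ β) (hαβ : (α + β) * B ≤ 1) :
    ∀ᵐ ω ∂P, β * Y ω - α * X ω ≤ 1 := by
  filter_upwards [hXB, hYB] with ω hx hy
  nlinarith [abs_le.1 hx, hy.1, hy.2]

theorem integrable_exp_mul_sub_mul [IsFiniteMeasure P]
    (hX : AEStronglyMeasurable X P) (hY : AEStronglyMeasurable Y P)
    (hXB : ∀ᵐ ω ∂P, |X ω| ≤ B) (hYB : ∀ᵐ ω ∂P, Y ω ∈ Set.Icc 0 B)
    (hα : 0 ≤ α) (hβ : 0 ≤ β) (hαβ : (α + β) * B ≤ 1) :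
    Integrable (fun ω => Real.exp (β * Y ω - α * X ω)) P :=
  integrable_exp_of_ae_le ((hY.const_mul β).sub (hX.const_mul α))
    (ae_mul_sub_mul_le_one hXB hYB hα hβ hαβ)

theorem condExp_exp_mul_sub_mul_le [IsFiniteMeasure P] (hm : m ≤ m0)
    (hX : AEStronglyMeasurable X P) (hY : AEStronglyMeasurable Y P)
    (hXB : ∀ᵐ ω ∂P, |X ω| ≤ B) (hYB : ∀ᵐ ω ∂P, Y ω ∈ Set.Icc 0 B)
    (hX2 : ∀ᵐ ω ∂P, (P[fun ω' => X ω' ^ 2 | m]) ω ≤ B * (P[X | m]) ω)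
    (hα : 0 ≤ α) (hβ : 0 ≤ β) (hαβ : (α + β) * B ≤ 1) :
    P[fun ω => Real.exp (β * Y ω - α * X ω) | m] ≤ᵐ[P]
      fun ω => Real.exp ((β + 2 * β ^ 2 * B) * (P[Y | m]) ω
        - (α - 2 * α ^ 2 * B) * (P[X | m]) ω) := by
  have hXint : Integrable X P :=
    .of_bound hX B (by simpa only [Real.norm_eq_abs] using hXB)
  have hYint : Integrable Y P := .of_bound hY B <| by
    filter_upwards [hYB] with ω h
    exact (Real.norm_eq_abs _).trans_le (abs_le.2 ⟨by linarith [h.1, h.2], h.2⟩)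
  have hX2int : Integrable (fun ω => X ω ^ 2) P := .of_bound (hX.pow 2) (B ^ 2) <| by
    filter_upwards [hXB] with ω h
    rw [Real.norm_eq_abs, abs_pow]
    exact pow_le_pow_left₀ (abs_nonneg _) h 2
  have hmajorant : ∀ᵐ ω ∂P, Real.exp (β * Y ω - α * X ω) ≤
      1 + (β + 2 * β ^ 2 * B) * Y ω + (-α) * X ω + (2 * α ^ 2) * X ω ^ 2 := by
    filter_upwards [hYB, ae_mul_sub_mul_le_one hXB hYB hα hβ hαβ] with ω hy hu
    have hsq : (β * Y ω - α * X ω) ^ 2 ≤ 2 * β ^ 2 * (B * Y ω) + 2 * α ^ 2 * X ω ^ 2 := by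
      nlinarith [sq_nonneg (β * Y ω + α * X ω), mul_le_mul_of_nonneg_right hy.2 hy.1,
        sq_nonneg β]
    linarith [Real.exp_le_one_add_add_sq hu]
  have hmajint : Integrable
      (fun ω => 1 + (β + 2 * β ^ 2 * B) * Y ω + (-α) * X ω + (2 * α ^ 2) * X ω ^ 2) P :=
    (((integrable_const 1).add (hYint.const_mul _)).add (hXint.const_mul _)).add
      (hX2int.const_mul _)
  filter_upwards [condExp_mono (m := m) (integrable_exp_mul_sub_mul hX hY hXB hYB hα hβ hαβ)
      hmajint hmajorant,
    condExp_const_add_mul_add_mul_add_mul hm hYint hXint hX2int 1 (β + 2 * β ^ 2 * B) (-α)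
      (2 * α ^ 2), hX2] with ω hmono hlin hω
  rw [hlin] at hmono
  refine hmono.trans (le_trans ?_ (Real.add_one_le_exp _))
  nlinarith [sq_nonneg α]

end OneStep

/-- `β Y - α X` minus its compensator from `condExp_exp_mul_sub_mul_le`, so that the
exponentials of partial sums of these increments form a supermartingale. -/
noncomputable def bernsteinIncrement (P : Measure Ω) (m : MeasurableSpace Ω) (X Y : Ω → ℝ)
    (B α β : ℝ) (ω : Ω) : ℝ :=
  β * Y ω - α * X ω - ((β + 2 * β ^ 2 * B) * (P[Y | m]) ω - (α - 2 * α ^ 2 * B) * (P[X | m]) ω)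

section Increment

variable {X Y : Ω → ℝ} {B α β : ℝ}

theorem stronglyMeasurable_bernsteinIncrement {m' : MeasurableSpace Ω} (hmm' : m ≤ m')
    (hX : StronglyMeasurable[m'] X) (hY : StronglyMeasurable[m'] Y) :
    StronglyMeasurable[m'] (bernsteinIncrement P m X Y B α β) :=
  ((hY.const_mul β).sub (hX.const_mul α)).sub
    (((stronglyMeasurable_condExp.mono hmm').const_mul _).sub
      ((stronglyMeasurable_condExp.mono hmm').const_mul _))

theorem bernsteinIncrement_le (hXB : ∀ᵐ ω ∂P, |X ω| ≤ B) (hYB : ∀ᵐ ω ∂P, Y ω ∈ Set.Icc 0 B)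
    (hα : 0 ≤ α) (hβ : 0 ≤ β) (hαβ : (α + β) * B ≤ 1) :
    ∀ᵐ ω ∂P, bernsteinIncrement P m X Y B α β ω ≤ 1 + |α - 2 * α ^ 2 * B| * B := by
  filter_upwards [hYB, ae_mul_sub_mul_le_one hXB hYB hα hβ hαβ,
    condExp_nonneg (m := m) (hYB.mono fun ω h => h.1),
    ae_bdd_abs_condExp_of_ae_bdd_abs (m := m) hXB] with ω hy hu hEY hEX
  have hB : 0 ≤ B := hy.1.trans hy.2
  have hEY' : 0 ≤ (β + 2 * β ^ 2 * B) * (P[Y | m]) ω := mul_nonneg (by positivity) hEY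
  have hEX' : (α - 2 * α ^ 2 * B) * (P[X | m]) ω ≤ |α - 2 * α ^ 2 * B| * B :=
    (le_abs_self _).trans (by rw [abs_mul]; exact mul_le_mul_of_nonneg_left hEX (abs_nonneg _))
  unfold bernsteinIncrement
  linarith

theorem condExp_exp_bernsteinIncrement_le_one [IsFiniteMeasure P] (hm : m ≤ m0)
    (hX : AEStronglyMeasurable X P) (hY : AEStronglyMeasurable Y P)
    (hXB : ∀ᵐ ω ∂P, |X ω| ≤ B) (hYB : ∀ᵐ ω ∂P, Y ω ∈ Set.Icc 0 B)
    (hX2 : ∀ᵐ ω ∂P, (P[fun ω' => X ω' ^ 2 | m]) ω ≤ B * (P[X | m]) ω)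
    (hα : 0 ≤ α) (hβ : 0 ≤ β) (hαβ : (α + β) * B ≤ 1) :
    P[fun ω => Real.exp (bernsteinIncrement P m X Y B α β ω) | m] ≤ᵐ[P] 1 := by
  set g : Ω → ℝ := fun ω =>
    (β + 2 * β ^ 2 * B) * (P[Y | m]) ω - (α - 2 * α ^ 2 * B) * (P[X | m]) ω
  have hg : StronglyMeasurable[m] fun ω => Real.exp (-g ω) :=
    Real.continuous_exp.comp_stronglyMeasurable
      ((stronglyMeasurable_condExp.const_mul _).sub (stronglyMeasurable_condExp.const_mul _)).neg
  have hsplit : (fun ω => Real.exp (bernsteinIncrement P m X Y B α β ω)) =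
      (fun ω => Real.exp (-g ω)) * fun ω => Real.exp (β * Y ω - α * X ω) := by
    ext ω
    simp only [bernsteinIncrement, Pi.mul_apply, ← Real.exp_add, g]
    ring_nf
  have hint : Integrable (fun ω => Real.exp (bernsteinIncrement P m X Y B α β ω)) P :=
    integrable_exp_of_ae_le (((hY.const_mul β).sub (hX.const_mul α)).sub
      ((stronglyMeasurable_condExp.mono hm).aestronglyMeasurable.const_mul _ |>.sub
        ((stronglyMeasurable_condExp.mono hm).aestronglyMeasurable.const_mul _)))
    (bernsteinIncrement_le hXB hYB hα hβ hαβ)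
  rw [hsplit] at hint ⊢
  filter_upwards [condExp_mul_of_stronglyMeasurable_left hg hint
      (integrable_exp_mul_sub_mul hX hY hXB hYB hα hβ hαβ),
    condExp_exp_mul_sub_mul_le hm hX hY hXB hYB hX2 hα hβ hαβ] with ω hpull hle
  rw [hpull, Pi.mul_apply, Pi.one_apply]
  calc Real.exp (-g ω) * (P[fun ω => Real.exp (β * Y ω - α * X ω) | m]) ω
      ≤ Real.exp (-g ω) * Real.exp (g ω) := mul_le_mul_of_nonneg_left hle (Real.exp_pos _).le
    _ = 1 := by rw [← Real.exp_add, neg_add_cancel, Real.exp_zero]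

theorem mul_bernsteinIncrement_div (hB : B ≠ 0) (a b : ℝ) (ω : Ω) :
    B * bernsteinIncrement P m X Y B (a / B) (b / B) ω =
      b * Y ω - a * X ω - ((b + 2 * b ^ 2) * (P[Y | m]) ω - (a - 2 * a ^ 2) * (P[X | m]) ω) := by
  unfold bernsteinIncrement
  field_simp

end Increment

theorem one_sub_le_measureReal_bernstein [IsProbabilityMeasure P] (ℱ : Filtration ℕ m0)
    (T : ℕ) {X Y : ℕ → Ω → ℝ} {B a b : ℝ} (hB : 0 < B)
    (hXmeas : ∀ t ∈ Icc 1 T, StronglyMeasurable[ℱ (t + 1)] (X t))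
    (hYmeas : ∀ t ∈ Icc 1 T, StronglyMeasurable[ℱ (t + 1)] (Y t))
    (hXbdd : ∀ t ∈ Icc 1 T, ∀ᵐ ω ∂P, |X t ω| ≤ B)
    (hYbdd : ∀ t ∈ Icc 1 T, ∀ᵐ ω ∂P, Y t ω ∈ Set.Icc 0 B)
    (hX2 : ∀ t ∈ Icc 1 T, ∀ᵐ ω ∂P,
      (P[fun ω' => X t ω' ^ 2 | ℱ t]) ω ≤ B * (P[X t | ℱ t]) ω)
    (ha : 0 ≤ a) (hb : 0 ≤ b) (hab : a + b ≤ 1) {δ : ℝ} (hδ : 0 < δ) :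
    1 - δ ≤ P.real {ω | b * ∑ t ∈ Icc 1 T, Y t ω - a * ∑ t ∈ Icc 1 T, X t ω
      - ((b + 2 * b ^ 2) * ∑ t ∈ Icc 1 T, (P[Y t | ℱ t]) ω
        - (a - 2 * a ^ 2) * ∑ t ∈ Icc 1 T, (P[X t | ℱ t]) ω) ≤ B * Real.log (1 / δ)} := by
  set Z : ℕ → Ω → ℝ := fun t => bernsteinIncrement P (ℱ t) (X t) (Y t) B (a / B) (b / B)
  have hαβ : (a / B + b / B) * B ≤ 1 := by rwa [← add_div, div_mul_cancel₀ _ hB.ne']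
  have hZm : ∀ t ∈ Icc 1 T, StronglyMeasurable[ℱ (t + 1)] (Z t) := fun t ht =>
    stronglyMeasurable_bernsteinIncrement (ℱ.mono t.le_succ) (hXmeas t ht) (hYmeas t ht)
  have hZC : ∀ t ∈ Icc 1 T, ∀ᵐ ω ∂P, Z t ω ≤ 1 + |a / B - 2 * (a / B) ^ 2 * B| * B :=
    fun t ht => bernsteinIncrement_le (hXbdd t ht) (hYbdd t ht) (by positivity) (by positivity) hαβ
  have hZexp : ∀ t ∈ Icc 1 T, P[fun ω => Real.exp (Z t ω) | ℱ t] ≤ᵐ[P] 1 := fun t ht =>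
    condExp_exp_bernsteinIncrement_le_one (ℱ.le t)
      ((hXmeas t ht).mono (ℱ.le _)).aestronglyMeasurable
      ((hYmeas t ht).mono (ℱ.le _)).aestronglyMeasurable
      (hXbdd t ht) (hYbdd t ht) (hX2 t ht) (by positivity) (by positivity) hαβ
  have hsum : ∀ ω, B * ∑ t ∈ Icc 1 T, Z t ω = b * ∑ t ∈ Icc 1 T, Y t ω
      - a * ∑ t ∈ Icc 1 T, X t ω - ((b + 2 * b ^ 2) * ∑ t ∈ Icc 1 T, (P[Y t | ℱ t]) ω
        - (a - 2 * a ^ 2) * ∑ t ∈ Icc 1 T, (P[X t | ℱ t]) ω) := fun ω => by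
    simp only [mul_sum, Z, mul_bernsteinIncrement_div hB.ne', sum_sub_distrib]
  refine (one_sub_le_measureReal_le_log (integrable_exp_sum _
    (fun t ht => ((hZm t ht).mono (ℱ.le _)).aestronglyMeasurable) hZC)
    (integral_exp_sum_le_one ℱ T hZm hZC hZexp) hδ).trans_eq (congrArg P.real ?_)
  ext ω
  simp only [Set.mem_ofPred_eq, ← hsum, mul_le_mul_iff_right₀ hB]

end

/-- Let `(Ω, 𝔉, P)` be a probability space with a filtration `ℱ`, and `(X_t, Y_t)_{t=1}^T`
pairs of real random variables, `ℱ_{t+1}`-measurable, with `|X_t| ≤ B`, `0 ≤ Y_t ≤ B`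
almost surely, `E[X_t | ℱ_t] ≥ E[Y_t | ℱ_t]`, and `B·E[X_t | ℱ_t] ≥ E[X_t² | ℱ_t]`. Then
for every `δ ∈ (0,1)`: (i) with probability at least `1 − δ`,
`(1/2) Σ_t E[X_t | ℱ_t] ≤ Σ_t (X_t − Y_t/4) + 9B log(1/δ)`; and (ii) with probability at
least `1 − δ`, `(1/2) Σ_t X_t ≤ Σ_t (X_t − Y_t/4) + 9B log(1/δ)`. -/
theorem useful_martingale_inequality
    {Ω : Type*} {m0 : MeasurableSpace Ω} (P : Measure Ω) [IsProbabilityMeasure P]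
    (ℱ : Filtration ℕ m0) (T : ℕ) (X Y : ℕ → Ω → ℝ) (B : ℝ) (hB : 0 < B)
    (hXmeas : ∀ t ∈ Icc 1 T, StronglyMeasurable[ℱ (t + 1)] (X t))
    (hYmeas : ∀ t ∈ Icc 1 T, StronglyMeasurable[ℱ (t + 1)] (Y t))
    (hXbdd : ∀ t ∈ Icc 1 T, ∀ᵐ ω ∂P, |X t ω| ≤ B)
    (hYbdd : ∀ t ∈ Icc 1 T, ∀ᵐ ω ∂P, Y t ω ∈ Set.Icc (0 : ℝ) B)
    (hXY : ∀ t ∈ Icc 1 T, ∀ᵐ ω ∂P, (P[Y t | ℱ t]) ω ≤ (P[X t | ℱ t]) ω)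
    (hX2 : ∀ t ∈ Icc 1 T, ∀ᵐ ω ∂P,
      (P[fun ω' => (X t ω') ^ 2 | ℱ t]) ω ≤ B * (P[X t | ℱ t]) ω)
    (δ : ℝ) (hδ0 : 0 < δ) (hδ1 : δ < 1) :
    ((1 : ℝ) - δ ≤
      (P {ω | (1 / 2) * ∑ t ∈ Icc 1 T, (P[X t | ℱ t]) ω ≤
          ∑ t ∈ Icc 1 T, (X t ω - Y t ω / 4) + 9 * B * Real.log (1 / δ)}).toReal) ∧
    ((1 : ℝ) - δ ≤
      (P {ω | (1 / 2) * ∑ t ∈ Icc 1 T, X t ω ≤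
          ∑ t ∈ Icc 1 T, (X t ω - Y t ω / 4) + 9 * B * Real.log (1 / δ)}).toReal) := by
  have hBL : 0 ≤ B * Real.log (1 / δ) :=
    mul_nonneg hB.le (Real.log_nonneg (by rw [le_div_iff₀ hδ0]; linarith))
  have hEYX : ∀ᵐ ω ∂P, ∑ t ∈ Icc 1 T, (P[Y t | ℱ t]) ω ≤ ∑ t ∈ Icc 1 T, (P[X t | ℱ t]) ω := by
    filter_upwards [(Filter.eventually_all_finset _).2 hXY] with ω hω using sum_le_sum hω
  have bernstein (a b : ℝ) (ha : 0 ≤ a) (hb : 0 ≤ b) (hab : a + b ≤ 1) :=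
    one_sub_le_measureReal_bernstein ℱ T hB hXmeas hYmeas hXbdd hYbdd hX2 ha hb hab hδ0
  -- The two choices of `(a, b)` give the bounds with `17 / 2` and `5 / 2` in place of `9`.
  constructor
  · refine (bernstein (2 / 17) (1 / 34) (by norm_num) (by norm_num) (by norm_num)).trans
      (ENNReal.toReal_mono (measure_ne_top _ _) (measure_mono_ae ?_))
    filter_upwards [hEYX] with ω hω hbern
    change _ ≤ _ at hbern ⊢
    simp only [sum_sub_distrib, ← sum_div] at hbern ⊢
    linarith
  · refine (bernstein (1 / 5) (1 / 10) (by norm_num) (by norm_num) (by norm_num)).trans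
      (ENNReal.toReal_mono (measure_ne_top _ _) (measure_mono_ae ?_))
    filter_upwards [hEYX] with ω hω hbern
    change _ ≤ _ at hbern ⊢
    simp only [sum_sub_distrib, ← sum_div] at hbern ⊢
    linarith
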